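/- arXiv:1508.01561 — 3 statements merged into one kernel-verified Lean document; each statement's English description precedes it below -/
import Mathlib

section
/- If (X,ν) is a contractive G-space and (Y,η) is any G-space, then the projection pr_Y : (X × Y, ν × η) → (Y,η), where X × Y carries the diagonal G-action, is relatively contractive. -/
open MeasureTheory Pointwise

/-! Under `g⁻¹`, the measure `ν × δ_{g•y}` becomes `g⁻¹ν × δ_y`, so the conjugated disintegration
of a set `B` is `ν (g • B_y)`, where `B_y` is the slice of `B` at `y`. Since `D(y)(B) = ν (B_y)`,
relative contractivity at `y` is contractivity of `ν` applied to the slice `B_y`. -/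

namespace MeasureTheory.Measure

variable {G X Y : Type*} [MeasurableSpace X] [MeasurableSpace Y]

lemma prod_dirac_apply (μ : Measure X) [SFinite μ] (y : Y) {B : Set (X × Y)}
    (hB : MeasurableSet B) : μ.prod (dirac y) B = μ ((·, y) ⁻¹' B) := by
  rw [prod_dirac, map_apply measurable_prodMk_right hB]

lemma map_smul_prod_dirac [SMul G X] [SMul G Y] (μ : Measure X) [SFinite μ] {g : G}
    (hX : Measurable fun x : X => g • x) (hY : Measurable fun y : Y => g • y) (y : Y) :
    map (fun p : X × Y => g • p) (μ.prod (dirac y)) = (map (g • ·) μ).prod (dirac (g • y)) := by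
  rw [← map_dirac' hY, map_prod_map _ _ hX hY]
  rfl

lemma map_inv_smul_prod_dirac_smul_apply [Group G] [MulAction G X] [MulAction G Y]
    (μ : Measure X) [SFinite μ] {g : G} (hX : Measurable fun x : X => g⁻¹ • x)
    (hY : Measurable fun y : Y => g⁻¹ • y) (y : Y) {B : Set (X × Y)} (hB : MeasurableSet B) :
    map (fun p : X × Y => g⁻¹ • p) (μ.prod (dirac (g • y))) B = μ (g • ((·, y) ⁻¹' B)) := by
  rw [map_smul_prod_dirac μ hX hY, inv_smul_smul, prod_dirac_apply _ _ hB,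
    map_apply hX (measurable_prodMk_right hB), Set.preimage_smul_inv]

end MeasureTheory.Measure

theorem product_projection_relContractive_general
    {G X Y : Type*} [Group G] [MeasurableSpace X] [MeasurableSpace Y]
    [MulAction G X] [MulAction G Y]
    (ν : Measure X) (η : Measure Y) [IsProbabilityMeasure ν]
    (hmX : ∀ g : G, Measurable (fun x : X => g • x))
    (hmY : ∀ g : G, Measurable (fun y : Y => g • y))
    (hcon : ∀ B : Set X, MeasurableSet B → 0 < ν B → (⨆ g : G, ν (g • B)) = 1) :
    ∀ᵐ y ∂η, ∀ B : Set (X × Y), MeasurableSet B →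
      0 < (ν.prod (Measure.dirac y)) B →
      (⨆ g : G, (Measure.map (fun p : X × Y => g⁻¹ • p)
        (ν.prod (Measure.dirac (g • y)))) B) = 1 := by
  refine Filter.Eventually.of_forall fun y B hB hpos => ?_
  simp_rw [Measure.map_inv_smul_prod_dirac_smul_apply ν (hmX _) (hmY _) y hB]
  rw [Measure.prod_dirac_apply ν y hB] at hpos
  exact hcon _ (measurable_prodMk_right hB) hpos

/-- If `(X,ν)` is a contractive `G`-space and `(Y,η)` any `G`-space, then the
projection `(X × Y, ν × η) → (Y, η)` (diagonal action) is relatively contractive: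
its disintegration is `D(y) = ν × δ_y` with conjugates `g⁻¹ • (ν × δ_{g•y})`. -/
theorem product_projection_relContractive
    {G X Y : Type*} [Group G] [MeasurableSpace X] [MeasurableSpace Y]
    [MulAction G X] [MulAction G Y]
    (ν : Measure X) (η : Measure Y) [IsProbabilityMeasure ν] [IsProbabilityMeasure η]
    (hmX : ∀ g : G, Measurable (fun x : X => g • x))
    (hmY : ∀ g : G, Measurable (fun y : Y => g • y))
    (hqν : ∀ g : G, Measure.map (fun x : X => g • x) ν ≪ ν)
    (hqη : ∀ g : G, Measure.map (fun y : Y => g • y) η ≪ η)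
    (hcon : ∀ B : Set X, MeasurableSet B → 0 < ν B → (⨆ g : G, ν (g • B)) = 1) :
    ∀ᵐ y ∂η, ∀ B : Set (X × Y), MeasurableSet B →
      0 < (ν.prod (Measure.dirac y)) B →
      (⨆ g : G, (Measure.map (fun p : X × Y => g⁻¹ • p)
        (ν.prod (Measure.dirac (g • y)))) B) = 1 :=
  product_projection_relContractive_general ν η hmX hmY hcon
end

section
/- If π : (X,ν) → (Y,η) is a relatively contractive G-map and (Z,ζ) is any G-space, then π × id : (X × Z, ν × ζ) → (Y × Z, η × ζ) (with diagonal G-actions) is relatively contractive. -/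
open MeasureTheory Pointwise

/-- If `π : (X,ν) → (Y,η)` is relatively contractive and `(Z,ζ)` is any `G`-space,
then `π × id : (X × Z, ν × ζ) → (Y × Z, η × ζ)` (diagonal actions) is relatively
contractive; its disintegration is `D(y,z) = D_π(y) × δ_z`. -/
theorem prod_id_relContractive
    {G X Y Z : Type*} [Group G] [MeasurableSpace X] [MeasurableSpace Y]
    [MeasurableSpace Z] [MulAction G X] [MulAction G Y] [MulAction G Z]
    (ν : Measure X) (η : Measure Y) (ζ : Measure Z)
    [IsProbabilityMeasure ν] [IsProbabilityMeasure η] [IsProbabilityMeasure ζ]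
    (hmX : ∀ g : G, Measurable (fun x : X => g • x))
    (hmY : ∀ g : G, Measurable (fun y : Y => g • y))
    (hmZ : ∀ g : G, Measurable (fun z : Z => g • z))
    (π : X → Y) (hπ : Measurable π)
    (hequi : ∀ (g : G) (x : X), π (g • x) = g • π x)
    (hpush : ν.map π = η)
    (D : Y → Measure X)
    (hDp : ∀ y, IsProbabilityMeasure (D y))
    (hDsupp : ∀ᵐ y ∂η, D y {x | π x ≠ y} = 0)
    (hDint : ∀ s : Set X, MeasurableSet s → ∫⁻ y, D y s ∂η = ν s)
    (hrc : ∀ᵐ y ∂η, ∀ B : Set X, MeasurableSet B → 0 < D y B →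
      (⨆ g : G, (Measure.map (fun x : X => g⁻¹ • x) (D (g • y))) B) = 1) :
    ∀ᵐ p ∂(η.prod ζ), ∀ B : Set (X × Z), MeasurableSet B →
      0 < ((D p.1).prod (Measure.dirac p.2)) B →
      (⨆ g : G, (Measure.map (fun q : X × Z => g⁻¹ • q)
        ((D (g • p.1)).prod (Measure.dirac (g • p.2)))) B) = 1 := by
  have hfst : (η.prod ζ).map Prod.fst = η := by
    rw [← Measure.fst, Measure.fst_prod]
  have h1 : ∀ᵐ p ∂(η.prod ζ), ∀ B : Set X, MeasurableSet B → 0 < D p.1 B →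
      (⨆ g : G, (Measure.map (fun x : X => g⁻¹ • x) (D (g • p.1))) B) = 1 := by
    exact ae_of_ae_map (f := (Prod.fst : Y × Z → Y)) (μ := η.prod ζ)
      (p := fun y : Y => ∀ B : Set X, MeasurableSet B → 0 < D y B →
        (⨆ g : G, (Measure.map (fun x : X => g⁻¹ • x) (D (g • y))) B) = 1)
      measurable_fst.aemeasurable (by rw [hfst]; exact hrc)
  filter_upwards [h1] with p hp B hB hpos
  obtain ⟨y, z⟩ := p
  simp only at hp hpos ⊢
  have hBz : MeasurableSet {x : X | (x, z) ∈ B} := measurable_prodMk_right hB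
  have hslice : ∀ (y' : Y) (z' : Z),
      (D y').prod (Measure.dirac z') B = D y' {x | (x, z') ∈ B} := by
    intro y' z'
    haveI := hDp y'
    rw [Measure.prod_dirac, Measure.map_apply measurable_prodMk_right hB]
    rfl
  have key : ∀ g : G,
      (Measure.map (fun q : X × Z => g⁻¹ • q) ((D (g • y)).prod (Measure.dirac (g • z)))) B
        = (Measure.map (fun x : X => g⁻¹ • x) (D (g • y))) {x | (x, z) ∈ B} := by
    intro g
    haveI := hDp (g • y)
    have heq : (fun q : X × Z => g⁻¹ • q)
        = Prod.map (fun x : X => g⁻¹ • x) (fun z' : Z => g⁻¹ • z') := rfl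
    rw [heq, ← Measure.map_prod_map _ _ (hmX g⁻¹) (hmZ g⁻¹),
      Measure.map_dirac' (hmZ g⁻¹), inv_smul_smul, Measure.prod_dirac,
      Measure.map_apply measurable_prodMk_right hB]
    rfl
  simp_rw [key]
  exact hp {x | (x, z) ∈ B} hBz (by rwa [hslice] at hpos)
end

section
/- Let (X,ν) be a contractive G-space and (Y,η) a measure-preserving G-space. Then the independent joining ν × η is the unique joining of (X,ν) and (Y,η) (with diagonal G-action) for which the projection to X is relatively measure-preserving. -/
open MeasureTheory Pointwise
open scoped ENNReal

/-- Measurable lower envelope: for any (possibly non-measurable) `h` bounded by `1` and a finite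
measure `ν`, there is a measurable `f ≤ h` whose set-lintegrals agree with those of `h`. -/
lemma exists_envelope {X : Type*} [MeasurableSpace X] (ν : Measure X) [IsFiniteMeasure ν]
    (h : X → ℝ≥0∞) (hb : ∀ x, h x ≤ 1) :
    ∃ f : X → ℝ≥0∞, Measurable f ∧ (∀ x, f x ≤ h x) ∧
      ∀ C : Set X, MeasurableSet C → ∫⁻ x in C, h x ∂ν = ∫⁻ x in C, f x ∂ν := by
  obtain ⟨f, hfm, hfle, hEq⟩ := exists_measurable_le_lintegral_eq ν h
  refine ⟨f, hfm, fun x => hfle x, ?_⟩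
  intro C hC
  have hTfin : ∫⁻ x, h x ∂ν ≠ ∞ := by
    refine ne_of_lt (lt_of_le_of_lt (lintegral_mono hb) ?_)
    simpa using (measure_lt_top ν Set.univ)
  have hsplit : ∫⁻ x in C, h x ∂ν + ∫⁻ x in Cᶜ, h x ∂ν ≤ ∫⁻ x, h x ∂ν := by
    rw [← lintegral_indicator hC h, ← lintegral_indicator hC.compl h]
    refine le_trans (le_lintegral_add _ _) (le_of_eq (lintegral_congr fun x => ?_))
    by_cases hx : x ∈ C <;> simp [hx]
  have hfsplit : ∫⁻ x in C, f x ∂ν + ∫⁻ x in Cᶜ, f x ∂ν = ∫⁻ x, f x ∂ν :=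
    lintegral_add_compl f hC
  have ha : ∫⁻ x in C, f x ∂ν ≤ ∫⁻ x in C, h x ∂ν := lintegral_mono fun x => hfle x
  have hbb : ∫⁻ x in Cᶜ, f x ∂ν ≤ ∫⁻ x in Cᶜ, h x ∂ν := lintegral_mono fun x => hfle x
  have hbfin : ∫⁻ x in Cᶜ, f x ∂ν ≠ ∞ := by
    refine ne_of_lt (lt_of_le_of_lt ?_ hTfin.lt_top)
    exact le_trans hbb (setLIntegral_le_lintegral _ _)
  have key : ∫⁻ x in C, h x ∂ν + ∫⁻ x in Cᶜ, f x ∂ν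
      = ∫⁻ x in C, f x ∂ν + ∫⁻ x in Cᶜ, f x ∂ν := by
    refine le_antisymm ?_ (add_le_add ha le_rfl)
    calc ∫⁻ x in C, h x ∂ν + ∫⁻ x in Cᶜ, f x ∂ν
        ≤ ∫⁻ x in C, h x ∂ν + ∫⁻ x in Cᶜ, h x ∂ν := add_le_add le_rfl hbb
      _ ≤ ∫⁻ x, h x ∂ν := hsplit
      _ = ∫⁻ x, f x ∂ν := hEq
      _ = _ := hfsplit.symm
  rw [add_comm (∫⁻ x in C, h x ∂ν), add_comm (∫⁻ x in C, f x ∂ν)] at key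
  exact ((ENNReal.cancel_of_ne hbfin).inj).mp key

/-- For a contractive `G`-space `(X,ν)` and a measure-preserving `G`-space
`(Y,η)`, the independent joining `ν × η` is the unique joining for which the
projection to `X` is relatively measure-preserving. -/
theorem unique_joining_relMP_over_contractive
    {G X Y : Type*} [Group G] [MeasurableSpace X] [MeasurableSpace Y]
    [MulAction G X] [MulAction G Y]
    (ν : Measure X) (η : Measure Y) [IsProbabilityMeasure ν] [IsProbabilityMeasure η]
    (hmX : ∀ g : G, Measurable (fun x : X => g • x))
    (hmY : ∀ g : G, Measurable (fun y : Y => g • y))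
    (hqν : ∀ g : G, Measure.map (fun x : X => g • x) ν ≪ ν)
    (hcon : ∀ B : Set X, MeasurableSet B → 0 < ν B → (⨆ g : G, ν (g • B)) = 1)
    (hinv : ∀ g : G, Measure.map (fun y : Y => g • y) η = η) :
    -- `ν × η` is such a joining: its disintegration `x ↦ δ_x × η` over `ν` is equivariant
    ((∀ s : Set (X × Y), MeasurableSet s →
        ∫⁻ x, ((Measure.dirac x).prod η) s ∂ν = (ν.prod η) s) ∧
     (∀ (g : G) (x : X), (Measure.dirac (g • x)).prod η
        = Measure.map (fun p : X × Y => g • p) ((Measure.dirac x).prod η))) ∧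
    -- and it is the unique such joining
    (∀ α : Measure (X × Y), IsProbabilityMeasure α →
      α.map Prod.fst = ν → α.map Prod.snd = η →
      (∀ g : G, Measure.map (fun p : X × Y => g • p) α ≪ α) →
      ∀ D : X → Measure (X × Y),
        (∀ x, IsProbabilityMeasure (D x)) →
        (∀ᵐ x ∂ν, D x {p : X × Y | p.1 ≠ x} = 0) →
        (∀ s : Set (X × Y), MeasurableSet s → ∫⁻ x, D x s ∂ν = α s) →
        (∀ g : G, ∀ᵐ x ∂ν, D (g • x) = Measure.map (fun p : X × Y => g • p) (D x)) →
        α = ν.prod η) := by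
  constructor
  · constructor
    · intro s hs
      have hint : ∀ x : X, ((Measure.dirac x).prod η) s = η (Prod.mk x ⁻¹' s) := fun x => by
        rw [Measure.prod_apply hs, lintegral_dirac' _ (measurable_measure_prodMk_left hs)]
      rw [Measure.prod_apply hs]
      exact lintegral_congr fun x => hint x
    · intro g x
      have hPm : (fun p : X × Y => g • p)
          = Prod.map (fun a : X => g • a) (fun b : Y => g • b) := by
        funext p; rfl
      rw [hPm, ← Measure.map_prod_map _ _ (hmX g) (hmY g), Measure.map_dirac' (hmX g), hinv g]
  · intro α hα hfst hsnd hqα D hDprob hDconc hDint hDequiv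
    have hαsnd : ∀ B' : Set Y, MeasurableSet B' → α (Set.univ ×ˢ B') = η B' := by
      intro B' hB'
      have hpre : (Set.univ : Set X) ×ˢ B' = (Prod.snd : X × Y → Y) ⁻¹' B' := by ext p; simp
      rw [hpre, ← Measure.map_apply measurable_snd hB', hsnd]
    have hαfst : ∀ C : Set X, MeasurableSet C → α (C ×ˢ (Set.univ : Set Y)) = ν C := by
      intro C hC
      have hpre : C ×ˢ (Set.univ : Set Y) = (Prod.fst : X × Y → X) ⁻¹' C := by ext p; simp
      rw [hpre, ← Measure.map_apply measurable_fst hC, hfst]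
    have main : ∀ B : Set Y, MeasurableSet B → ∃ f : X → ℝ≥0∞, Measurable f ∧
        (∀ C : Set X, MeasurableSet C → ∫⁻ x in C, f x ∂ν = α (C ×ˢ B)) ∧
        (∀ᵐ x ∂ν, f x ≤ η B) := by
      intro B hB
      set h : X → ℝ≥0∞ := fun x => D x (Set.univ ×ˢ B) with hh
      have hb : ∀ x, h x ≤ 1 := fun x => by
        haveI := hDprob x; exact prob_le_one
      obtain ⟨f, hfm, hfle, hfC⟩ := exists_envelope ν h hb
      have hCint : ∀ C : Set X, MeasurableSet C → ∫⁻ x in C, f x ∂ν = α (C ×ˢ B) := by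
        intro C hC
        rw [← hfC C hC, ← lintegral_indicator hC h, ← hDint _ (hC.prod hB)]
        refine lintegral_congr_ae ?_
        filter_upwards [hDconc] with x hx
        by_cases hxC : x ∈ C
        · rw [Set.indicator_of_mem hxC]
          refine le_antisymm ?_ (measure_mono fun p hp => ⟨trivial, hp.2⟩)
          have hz : D x ((Set.univ ×ˢ B) \ (C ×ˢ B)) = 0 := by
            refine measure_mono_null ?_ hx
            rintro ⟨a, b⟩ ⟨⟨-, hbB⟩, hnot⟩ (hax : a = x)
            exact hnot ⟨hax ▸ hxC, hbB⟩
          calc h x ≤ D x ((C ×ˢ B) ∪ ((Set.univ ×ˢ B) \ (C ×ˢ B))) := by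
                refine measure_mono fun p hp => ?_
                by_cases hpC : p ∈ C ×ˢ B
                · exact Or.inl hpC
                · exact Or.inr ⟨hp, hpC⟩
            _ ≤ D x (C ×ˢ B) + D x ((Set.univ ×ˢ B) \ (C ×ˢ B)) := measure_union_le _ _
            _ = D x (C ×ˢ B) := by rw [hz, add_zero]
        · rw [Set.indicator_of_notMem hxC]
          refine (measure_mono_null ?_ hx).symm
          rintro ⟨a, b⟩ ⟨haC, hbB⟩ (hax : a = x)
          exact hxC (hax ▸ haC)
      have claim : ∀ ε : ℝ≥0∞, 0 < ε → ε ≠ ∞ → ν {x | η B + ε ≤ f x} = 0 := by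
        intro ε hε hεtop
        by_contra hne
        have hc1 : η B ≤ 1 := prob_le_one
        have hctop : η B ≠ ∞ := ne_of_lt (lt_of_le_of_lt hc1 ENNReal.one_lt_top)
        have hcε0 : η B + ε ≠ 0 := by simp [add_eq_zero, hε.ne']
        have hcεtop : η B + ε ≠ ∞ := ENNReal.add_ne_top.mpr ⟨hctop, hεtop⟩
        set A := {x | η B + ε ≤ f x} with hAdef
        have hAm : MeasurableSet A := measurableSet_le measurable_const hfm
        have hApos : 0 < ν A := pos_iff_ne_zero.mpr hne
        have hsup := hcon A hAm hApos
        have hlt1 : η B / (η B + ε) < 1 := by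
          rw [ENNReal.div_lt_iff (Or.inl hcε0) (Or.inl hcεtop), one_mul]
          exact ENNReal.lt_add_right hctop hε.ne'
        obtain ⟨g, hg⟩ : ∃ g : G, η B / (η B + ε) < ν (g • A) := by
          rw [← hsup] at hlt1
          exact lt_iSup_iff.mp hlt1
        let e : X ≃ᵐ X :=
          { toFun := fun x => g⁻¹ • x
            invFun := fun x => g • x
            left_inv := fun x => by simp
            right_inv := fun x => by simp
            measurable_toFun := hmX g⁻¹
            measurable_invFun := hmX g }
        set lam := Measure.map (fun x : X => g⁻¹ • x) ν with hlam
        have hlamA : η B / (η B + ε) < lam A := by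
          rw [hlam, Measure.map_apply (hmX g⁻¹) hAm]
          convert hg using 2
          ext x
          simp [Set.mem_smul_set_iff_inv_smul_mem]
        have hup : ∫⁻ x, h x ∂lam = η B := by
          have hmap : ∫⁻ x, h x ∂lam = ∫⁻ x, h (g⁻¹ • x) ∂ν := by
            have he : lam = Measure.map e ν := rfl
            rw [he, lintegral_map_equiv]
            rfl
          set B' := (fun y : Y => g⁻¹ • y) ⁻¹' B with hB'def
          have hB' : MeasurableSet B' := hmY g⁻¹ hB
          have hdiagm : Measurable (fun p : X × Y => g⁻¹ • p) := by
            show Measurable fun p : X × Y => (g⁻¹ • p.1, g⁻¹ • p.2)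
            exact ((hmX g⁻¹).comp measurable_fst).prodMk ((hmY g⁻¹).comp measurable_snd)
          have h2 : ∫⁻ x, h (g⁻¹ • x) ∂ν = ∫⁻ x, D x (Set.univ ×ˢ B') ∂ν := by
            refine lintegral_congr_ae ?_
            filter_upwards [hDequiv g⁻¹] with x hx
            show D (g⁻¹ • x) (Set.univ ×ˢ B) = D x (Set.univ ×ˢ B')
            rw [hx, Measure.map_apply hdiagm (MeasurableSet.univ.prod hB)]
            congr 1
          rw [hmap, h2, hDint _ (MeasurableSet.univ.prod hB'), hαsnd B' hB', hB'def,
            ← Measure.map_apply (hmY g⁻¹) hB, hinv g⁻¹]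
        have hlow : η B < ∫⁻ x, h x ∂lam := by
          have h1 : η B < (η B + ε) * lam A := by
            have := (ENNReal.div_lt_iff (Or.inl hcε0) (Or.inl hcεtop)).mp hlamA
            rwa [mul_comm] at this
          calc η B < (η B + ε) * lam A := h1
            _ = ∫⁻ _ in A, (η B + ε) ∂lam := (setLIntegral_const A _).symm
            _ ≤ ∫⁻ x in A, f x ∂lam := setLIntegral_mono' hAm fun x hx => hx
            _ ≤ ∫⁻ x, f x ∂lam := setLIntegral_le_lintegral _ _
            _ ≤ ∫⁻ x, h x ∂lam := lintegral_mono fun x => hfle x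
        exact absurd hup hlow.ne'
      have hae : ∀ᵐ x ∂ν, f x ≤ η B := by
        have hnull : ν {x | η B < f x} = 0 := by
          have hsub : {x | η B < f x}
              ⊆ ⋃ n : ℕ, {x | η B + ((n : ℝ≥0∞) + 1)⁻¹ ≤ f x} := by
            intro x hx
            have hpos : f x - η B ≠ 0 := (tsub_pos_of_lt hx).ne'
            obtain ⟨n, hn⟩ := ENNReal.exists_inv_nat_lt hpos
            refine Set.mem_iUnion.mpr ⟨n, ?_⟩
            have h1 : ((n : ℝ≥0∞) + 1)⁻¹ ≤ (n : ℝ≥0∞)⁻¹ :=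
              ENNReal.inv_le_inv.mpr le_self_add
            show η B + ((n : ℝ≥0∞) + 1)⁻¹ ≤ f x
            calc η B + ((n : ℝ≥0∞) + 1)⁻¹ ≤ η B + (f x - η B) :=
                  add_le_add le_rfl (h1.trans hn.le)
              _ = f x := add_tsub_cancel_of_le hx.le
          refine measure_mono_null hsub (measure_iUnion_null fun n => claim _ ?_ ?_)
          · exact ENNReal.inv_pos.mpr (ENNReal.add_ne_top.mpr
              ⟨ENNReal.natCast_ne_top n, ENNReal.one_ne_top⟩)
          · exact ENNReal.inv_ne_top.mpr (by simp)
        rw [ae_iff]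
        simpa [not_le] using hnull
      exact ⟨f, hfm, hCint, hae⟩
    have hrect : ∀ (s : Set X) (t : Set Y), MeasurableSet s → MeasurableSet t →
        α (s ×ˢ t) = ν s * η t := by
      intro C B hC hB
      obtain ⟨f1, hf1m, hf1int, hf1le⟩ := main B hB
      obtain ⟨f2, hf2m, hf2int, hf2le⟩ := main Bᶜ hB.compl
      have hsum : (fun x => f1 x + f2 x) =ᵐ[ν] fun _ => 1 := by
        refine ae_eq_of_forall_setLIntegral_eq_of_sigmaFinite (hf1m.add hf2m)
          measurable_const ?_
        intro s hs _
        rw [lintegral_add_left hf1m, hf1int s hs, hf2int s hs, setLIntegral_one]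
        rw [← measure_union ?_ (hs.prod hB.compl)]
        · rw [← Set.prod_union, Set.union_compl_self]
          exact hαfst s hs
        · refine Set.disjoint_left.mpr ?_
          rintro ⟨a, b⟩ ⟨-, hbB⟩ ⟨-, hbB'⟩
          exact hbB' hbB
      have hconst : f1 =ᵐ[ν] fun _ => η B := by
        have hcompl : η Bᶜ = 1 - η B := prob_compl_eq_one_sub hB
        filter_upwards [hsum, hf1le, hf2le] with x h1 h2 h3
        refine le_antisymm h2 ?_
        by_contra hlt
        push_neg at hlt
        have hne : (1 : ℝ≥0∞) - η B ≠ ∞ := ne_top_of_le_ne_top ENNReal.one_ne_top tsub_le_self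
        have hstrict : f1 x + f2 x < η B + (1 - η B) := by
          calc f1 x + f2 x ≤ f1 x + (1 - η B) := add_le_add le_rfl (h3.trans hcompl.le)
            _ < η B + (1 - η B) := ENNReal.add_lt_add_right hne hlt
        rw [add_tsub_cancel_of_le prob_le_one] at hstrict
        exact absurd h1 hstrict.ne
      calc α (C ×ˢ B) = ∫⁻ x in C, f1 x ∂ν := (hf1int C hC).symm
        _ = ∫⁻ _ in C, η B ∂ν := lintegral_congr_ae (ae_restrict_of_ae hconst)
        _ = η B * ν C := setLIntegral_const C _
        _ = ν C * η B := mul_comm _ _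
    exact (Measure.prod_eq fun s t hs ht => hrect s t hs ht).symm
end
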